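/- Let the error equation ε(μ̄, μ̄) + c(τ, τ) = ε(div(Πq̄ - q̄), τ) + c(Pu - u, τ) + ε(Πq̄ - q̄, μ̄) - ε(div μ̄, Pu - u) hold, where P is the L² projection onto W^N so that (Pu - u, τ) = 0 and (div μ̄, Pu - u) = 0. Then ‖μ̄‖₀² ≤ C( ε‖div(Πq̄ - q̄)‖₀² + ‖Πq̄ - q̄‖₀² ), with C depending only on c. -/

import Mathlib

/-! Once the orthogonality terms drop out, Cauchy–Schwarz and Young's inequality
`εab ≤ ε²a²/(2c) + cb²/2` absorb the `τ`-term into `c‖τ‖²` and half of the `μ̄`-term into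
`ε‖μ̄‖²`, leaving `ε‖μ̄‖² ≤ ε²‖d‖²/c + ε‖e‖²`; dividing by `ε` gives the bound with
`C = c⁻¹ + 1`. -/

open RealInnerProductSpace

theorem sq_le_of_weighted_sq_le {ε c x y a b : ℝ} (hε : 0 < ε) (hc : 0 < c)
    (h : ε * x ^ 2 + c * y ^ 2 ≤ ε * (a * y) + ε * (b * x)) :
    x ^ 2 ≤ ε * a ^ 2 / c + b ^ 2 := by
  have young_ay : 2 * c * (ε * (a * y)) ≤ ε ^ 2 * a ^ 2 + c ^ 2 * y ^ 2 := by
    nlinarith [sq_nonneg (ε * a - c * y)]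
  have young_bx : 2 * (b * x) ≤ b ^ 2 + x ^ 2 := by nlinarith [sq_nonneg (b - x)]
  have absorbed : ε * (c * x ^ 2) ≤ ε * (ε * a ^ 2 + c * b ^ 2) := by
    nlinarith [mul_le_mul_of_nonneg_left young_bx (mul_nonneg hc.le hε.le)]
  have := le_of_mul_le_mul_left absorbed hε
  rw [div_add' _ _ _ hc.ne', le_div_iff₀ hc]
  linarith

theorem weighted_norm_sq_le_of_energy_eq {W V : Type*} [NormedAddCommGroup W]
    [InnerProductSpace ℝ W] [NormedAddCommGroup V] [InnerProductSpace ℝ V]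
    {ε c : ℝ} (hε : 0 ≤ ε) {mu e : V} {tau d : W}
    (h : ε * ⟪mu, mu⟫ + c * ⟪tau, tau⟫ = ε * ⟪d, tau⟫ + ε * ⟪e, mu⟫) :
    ε * ‖mu‖ ^ 2 + c * ‖tau‖ ^ 2 ≤ ε * (‖d‖ * ‖tau‖) + ε * (‖e‖ * ‖mu‖) := by
  rw [real_inner_self_eq_norm_sq, real_inner_self_eq_norm_sq] at h
  rw [h]
  gcongr <;> exact real_inner_le_norm _ _

/-- From the mixed-method error equation
`ε(μ̄,μ̄) + c(τ,τ) = ε(div(Πq̄-q̄),τ) + c(Pu-u,τ) + ε(Πq̄-q̄,μ̄) - ε(div μ̄, Pu-u)`,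
where the `L²`-projection orthogonality gives `(Pu-u,τ) = 0` and `(div μ̄, Pu-u) = 0`,
one obtains `‖μ̄‖₀² ≤ C(ε‖div(Πq̄-q̄)‖₀² + ‖Πq̄-q̄‖₀²)` for `0 < ε ≤ 1`, with `C`
depending only on `c`.  Here `d := div(Πq̄-q̄) ∈ W`, `e := Πq̄-q̄ ∈ Vh`, `r := Pu - u`,
`dm := div μ̄`. -/
theorem mixed_method_error_bound
    (W Vh : Type*) [NormedAddCommGroup W] [InnerProductSpace ℝ W]
    [NormedAddCommGroup Vh] [InnerProductSpace ℝ Vh] :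
    ∀ c : ℝ, 0 < c → ∃ C : ℝ, 0 < C ∧
      ∀ (ε : ℝ) (mu e : Vh) (tau d r dm : W), 0 < ε → ε ≤ 1 →
        (inner ℝ r tau : ℝ) = 0 → (inner ℝ dm r : ℝ) = 0 →
        ε * (inner ℝ mu mu : ℝ) + c * (inner ℝ tau tau : ℝ) =
          ε * (inner ℝ d tau : ℝ) + c * (inner ℝ r tau : ℝ) +
            ε * (inner ℝ e mu : ℝ) - ε * (inner ℝ dm r : ℝ) →
        ‖mu‖ ^ 2 ≤ C * (ε * ‖d‖ ^ 2 + ‖e‖ ^ 2) := by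
  intro c hc
  refine ⟨c⁻¹ + 1, by positivity, ?_⟩
  intro ε mu e tau d r dm hε _ hr hdm heq
  rw [hr, hdm, mul_zero, add_zero, mul_zero, sub_zero] at heq
  have energy := weighted_norm_sq_le_of_energy_eq hε.le heq
  have hd : 0 ≤ ε * ‖d‖ ^ 2 := by positivity
  have he : 0 ≤ c⁻¹ * ‖e‖ ^ 2 := by positivity
  calc ‖mu‖ ^ 2 ≤ ε * ‖d‖ ^ 2 / c + ‖e‖ ^ 2 := sq_le_of_weighted_sq_le hε hc energy
    _ ≤ (c⁻¹ + 1) * (ε * ‖d‖ ^ 2 + ‖e‖ ^ 2) := by linear_combination hd + he
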